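/- Let F be an infinite field, n ≥ 2, and let g = (V,[,]) be an n-dimensional F-algebra for which there exists x ∈ V with [x,x] ∉ span_F(x). Then g degenerates to d_n, the algebra with basis (v_1,...,v_n) whose only nonzero basis product is [v_1,v_1] = v_2. -/

import Mathlib

open scoped BigOperators

/-- Change-of-basis action of `GL(n,F)` on structure vectors in `F^(n³)`. -/
def actSV {F : Type*} [Field F] {n : ℕ} (g : GL (Fin n) F)
    (lam : Fin n → Fin n → Fin n → F) : Fin n → Fin n → Fin n → F :=
  fun a b c => ∑ i, ∑ j, ∑ k,
    (g : Matrix (Fin n) (Fin n) F) i a * (g : Matrix (Fin n) (Fin n) F) j b *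
      ((g⁻¹ : GL (Fin n) F) : Matrix (Fin n) (Fin n) F) c k * lam i j k

/-- The `GL(n,F)`-orbit of a structure vector. -/
def orbitSV {F : Type*} [Field F] {n : ℕ} (lam : Fin n → Fin n → Fin n → F) :
    Set (Fin n → Fin n → Fin n → F) :=
  {mu | ∃ g : GL (Fin n) F, mu = actSV g lam}

/-- Zariski closure of a set of structure vectors: the common zero locus of all
polynomials vanishing on the set. -/
def zClosure {F : Type*} [Field F] {n : ℕ} (S : Set (Fin n → Fin n → Fin n → F)) :
    Set (Fin n → Fin n → Fin n → F) :=
  {mu | ∀ p : MvPolynomial (Fin n × Fin n × Fin n) F,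
      (∀ lam ∈ S, MvPolynomial.eval (fun t => lam t.1 t.2.1 t.2.2) p = 0) →
      MvPolynomial.eval (fun t => mu t.1 t.2.1 t.2.2) p = 0}


/-!
Pick `x` with `[x,x] ∉ span {x}` and a basis `e` with `e₀ = x`, `e₁ = [x,x]`. The diagonal
one-parameter subgroup `t ↦ diag (t, t², …, t²)` multiplies the structure constant `λᵢⱼᵏ` by
`t ^ (qᵢ + qⱼ - qₖ)` with weights `q = (1, 2, …, 2)`. Every exponent is nonnegative, so the
orbit contains a polynomial curve in `t ≠ 0`; over an infinite field a polynomial vanishing on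
the curve vanishes at `t = 0` as well. There only the constants with `qᵢ + qⱼ = qₖ`, i.e.
`λ₀₀ᵏ` for `k ≠ 0`, survive, and they form the structure vector of `d_n`.
-/

open Polynomial Module Matrix

theorem Module.Basis.sumExtend_inl {F V ι : Type*} [Field F] [AddCommGroup V] [Module F V]
    {v : ι → V} (hv : LinearIndependent F v) (i : ι) :
    Basis.sumExtend hv (Sum.inl i) = v i := by
  simp only [Basis.sumExtend, Basis.reindex_apply, Basis.extend_apply_self]
  rfl

theorem exists_basis_fin_extending {F V : Type*} [Field F] [AddCommGroup V] [Module F V]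
    [FiniteDimensional F V] {m n : ℕ} (hV : finrank F V = n) {v : Fin m → V}
    (hv : LinearIndependent F v) :
    ∃ b : Basis (Fin n) F V, ∀ (i : Fin n) (hi : (i : ℕ) < m), b i = v ⟨i, hi⟩ := by
  let J := Basis.sumExtendIndex hv
  have : Finite (Fin m ⊕ J) := Module.Finite.finite_basis (Basis.sumExtend hv)
  have : Fintype J :=
    have := Finite.of_injective (β := Fin m ⊕ J) _ Sum.inr_injective
    Fintype.ofFinite J
  have hcard : m + Fintype.card J = n := by
    rw [← hV, finrank_eq_card_basis (Basis.sumExtend hv), Fintype.card_sum, Fintype.card_fin]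
  let e : Fin m ⊕ J ≃ Fin n :=
    ((Equiv.refl _).sumCongr (Fintype.equivFin J)).trans (finSumFinEquiv.trans (finCongr hcard))
  refine ⟨(Basis.sumExtend hv).reindex e, fun i hi => ?_⟩
  have he : e.symm i = Sum.inl ⟨i, hi⟩ := by
    rw [Equiv.symm_apply_eq]
    ext
    simp [e]
  rw [Basis.reindex_apply, he, Basis.sumExtend_inl]

def Matrix.diagonalGL {ι F : Type*} [Fintype ι] [DecidableEq ι] [CommRing F] (d : ι → Fˣ) :
    GL ι F :=
  ⟨diagonal fun i => d i, diagonal fun i => ↑(d i)⁻¹, by simp [diagonal_mul_diagonal],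
    by simp [diagonal_mul_diagonal]⟩

theorem actSV_diagonalGL {F : Type*} [Field F] {n : ℕ} (d : Fin n → Fˣ)
    (lam : Fin n → Fin n → Fin n → F) :
    actSV (diagonalGL d) lam = fun a b c => d a * d b * ↑(d c)⁻¹ * lam a b c := by
  funext a b c
  simp [actSV, diagonalGL, diagonal_apply, ite_mul, mul_ite]

theorem eval_mem_zClosure_of_infinite {F : Type*} [Field F] {n : ℕ}
    {S : Set (Fin n → Fin n → Fin n → F)} (f : Fin n → Fin n → Fin n → F[X]) {s : Set F}
    (hs : s.Infinite) (hf : ∀ t ∈ s, (fun a b c => (f a b c).eval t) ∈ S) (t₀ : F) :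
    (fun a b c => (f a b c).eval t₀) ∈ zClosure S := by
  intro p hp
  set P : F[X] := MvPolynomial.eval₂ C (fun x => f x.1 x.2.1 x.2.2) p
  have hP : ∀ t, P.eval t = MvPolynomial.eval (fun x => (f x.1 x.2.1 x.2.2).eval t) p := by
    intro t
    rw [MvPolynomial.polynomial_eval_eval₂, evalRingHom, eval₂RingHom_comp_C]
    rfl
  have hP0 : P = 0 :=
    eq_zero_of_infinite_isRoot P (hs.mono fun t ht => by simpa [hP] using hp _ (hf t ht))
  simpa [hP] using congrArg (eval t₀) hP0

def weightedLimit {F : Type*} [Field F] {n : ℕ} (q : Fin n → ℕ)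
    (lam : Fin n → Fin n → Fin n → F) : Fin n → Fin n → Fin n → F :=
  fun a b c => if q a + q b = q c then lam a b c else 0

theorem weightedLimit_mem_zClosure_orbitSV {F : Type*} [Field F] [Infinite F] {n : ℕ}
    (lam : Fin n → Fin n → Fin n → F) (q : Fin n → ℕ)
    (hq : ∀ a b c, lam a b c ≠ 0 → q c ≤ q a + q b) :
    weightedLimit q lam ∈ zClosure (orbitSV lam) := by
  have hlim : weightedLimit q lam =
      fun a b c => (C (lam a b c) * X ^ (q a + q b - q c)).eval 0 := by
    funext a b c
    by_cases h : lam a b c = 0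
    · simp [weightedLimit, h]
    · have := hq a b c h
      simp only [weightedLimit, eval_mul, eval_C, eval_pow, eval_X, zero_pow_eq]
      split_ifs <;> first | omega | simp
  rw [hlim]
  refine eval_mem_zClosure_of_infinite _ (Set.finite_singleton 0).infinite_compl (fun t ht => ?_) 0
  have ht : t ≠ 0 := ht
  refine ⟨diagonalGL fun i => Units.mk0 t ht ^ q i, ?_⟩
  rw [actSV_diagonalGL]
  funext a b c
  by_cases h : lam a b c = 0
  · simp [h]
  · simp [pow_sub₀ _ ht (hq a b c h)]
    ring

/-- over an infinite field, an `n`-dimensional algebra (`n ≥ 2`)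
possessing an element `x` with `[x,x] ∉ span{x}` degenerates to `d_n` (the algebra whose
only nonzero basis product is `[v₁,v₁] = v₂`): the structure vector `δ_n` lies in the
Zariski closure of the orbit of any structure vector of the algebra. -/
theorem degeneration_to_dn {F V : Type*} [Field F] [Infinite F]
    [AddCommGroup V] [Module F V] [FiniteDimensional F V]
    {n : ℕ} (hn : 2 ≤ n) (hV : Module.finrank F V = n)
    (B : V →ₗ[F] V →ₗ[F] V)
    (hx : ∃ x : V, B x x ∉ Submodule.span F {x})
    (delta : Fin n → Fin n → Fin n → F)
    (hdelta : ∀ i j k : Fin n,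
      delta i j k =
        if i = (⟨0, by omega⟩ : Fin n) ∧ j = (⟨0, by omega⟩ : Fin n) ∧
            k = (⟨1, by omega⟩ : Fin n) then 1
        else 0) :
    ∃ lam : Fin n → Fin n → Fin n → F,
      (∃ b : Module.Basis (Fin n) F V, ∀ i j, B (b i) (b j) = ∑ k, lam i j k • b k) ∧
      delta ∈ zClosure (orbitSV lam) := by
  obtain ⟨x, hx⟩ := hx
  have hx0 : x ≠ 0 := by
    rintro rfl
    simp at hx
  have hli : LinearIndependent F ![x, B x x] := (LinearIndependent.pair_iff' hx0).2 fun a h =>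
    hx (h ▸ Submodule.smul_mem _ a (Submodule.mem_span_singleton_self x))
  obtain ⟨b, hb⟩ := exists_basis_fin_extending hV hli
  set o : Fin n := ⟨0, by omega⟩
  set l : Fin n := ⟨1, by omega⟩
  let lam : Fin n → Fin n → Fin n → F := fun i j k => b.repr (B (b i) (b j)) k
  have hlam : ∀ k, lam o o k = if k = l then 1 else 0 := by
    intro k
    have hbo : b o = x := (hb o (by simp [o])).trans rfl
    have hbl : b l = B x x := (hb l (by simp [l])).trans rfl
    simp only [lam, hbo, ← hbl, b.repr_self, Finsupp.single_apply, eq_comm]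
  refine ⟨lam, ⟨b, fun i j => (b.sum_repr _).symm⟩, ?_⟩
  convert weightedLimit_mem_zClosure_orbitSV lam (fun i => if i = o then 1 else 2)
    (fun _ _ _ _ => by split_ifs <;> omega) using 1
  funext i j k
  rw [hdelta, weightedLimit]
  by_cases hij : i = o ∧ j = o
  · obtain ⟨rfl, rfl⟩ := hij
    rw [hlam]
    have : l ≠ o := by simp [l, o, Fin.ext_iff]
    split_ifs <;> simp_all
  · rw [if_neg (fun h => hij ⟨h.1, h.2.1⟩), if_neg (by split_ifs <;> simp_all)]
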